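/- arXiv:1312.1661 — 3 statements merged into one kernel-verified Lean document; each statement's English description precedes it below -/
import Mathlib

section
/- For n ≥ 2, the polynomial Σ_{i=1}^{⌊n/2⌋} x_i·2^{i-1} − Σ_{i=⌈n/2⌉+1}^{n} x_i·2^{n-i} over the ring ℤ_{2^{⌊n/2⌋}} is a characteristic polynomial of the Palindrome function: for all σ ∈ {0,1}^n, Σ_{i=1}^{⌊n/2⌋} σ_i·2^{i-1} ≡ Σ_{i=⌈n/2⌉+1}^{n} σ_i·2^{n-i} (mod 2^{⌊n/2⌋}) if and only if σ_i = σ_{n+1-i} for all i with 1 ≤ i ≤ ⌊n/2⌋. -/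
open Finset

private lemma bitsum_lt (m : ℕ) (a : ℕ → ℕ) (ha : ∀ j, a j ≤ 1) :
    (∑ j ∈ range m, a j * 2 ^ j) < 2 ^ m := by
  induction m with
  | zero => simp
  | succ m ih =>
    rw [Finset.sum_range_succ, pow_succ]
    have h1 := ha m
    have h2 : a m * 2 ^ m ≤ 2 ^ m := by
      calc a m * 2 ^ m ≤ 1 * 2 ^ m := Nat.mul_le_mul_right _ h1
      _ = 2 ^ m := one_mul _
    omega

private lemma bitsum_inj (m : ℕ) (a b : ℕ → ℕ) (ha : ∀ j, a j ≤ 1) (hb : ∀ j, b j ≤ 1)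
    (h : ∑ j ∈ range m, a j * 2 ^ j = ∑ j ∈ range m, b j * 2 ^ j) :
    ∀ j < m, a j = b j := by
  induction m with
  | zero => omega
  | succ m ih =>
    rw [Finset.sum_range_succ, Finset.sum_range_succ] at h
    have h1 := bitsum_lt m a ha
    have h2 := bitsum_lt m b hb
    have key : a m = b m ∧ (∑ j ∈ range m, a j * 2 ^ j) = ∑ j ∈ range m, b j * 2 ^ j := by
      rcases Nat.le_one_iff_eq_zero_or_eq_one.mp (ha m) with h0 | h0 <;>
        rcases Nat.le_one_iff_eq_zero_or_eq_one.mp (hb m) with h1' | h1' <;>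
          rw [h0, h1'] at h <;>
          simp only [zero_mul, one_mul, add_zero] at h <;>
          exact ⟨by omega, by omega⟩
    intro j hj
    rcases Nat.lt_succ_iff_lt_or_eq.mp hj with hj' | hj'
    · exact ih key.2 j hj'
    · subst hj'; exact key.1


/-- **Characteristic polynomial of `Palindrome_n`.**
For `n ≥ 2`, the polynomial `Σ_{i=1}^{⌊n/2⌋} x_i·2^{i-1} − Σ_{i=⌈n/2⌉+1}^{n} x_i·2^{n-i}`
over `ℤ_{2^{⌊n/2⌋}}` is a characteristic polynomial of the palindrome test:
for all `σ ∈ {0,1}^n` (indexed `1,…,n`),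
`Σ_{i=1}^{⌊n/2⌋} σ_i·2^{i-1} ≡ Σ_{i=⌈n/2⌉+1}^{n} σ_i·2^{n-i} (mod 2^{⌊n/2⌋})`
iff `σ_i = σ_{n+1-i}` for all `1 ≤ i ≤ ⌊n/2⌋`. -/
theorem palindrome_characteristic_polynomial (n : ℕ) (hn : 2 ≤ n) (σ : ℕ → Bool) :
    (∑ i ∈ Finset.Icc 1 (n / 2),
        (if σ i then (1 : ZMod (2 ^ (n / 2))) else 0) * 2 ^ (i - 1))
      = (∑ i ∈ Finset.Icc ((n + 1) / 2 + 1) n,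
          (if σ i then (1 : ZMod (2 ^ (n / 2))) else 0) * 2 ^ (n - i))
      ↔ ∀ i : ℕ, 1 ≤ i → i ≤ n / 2 → σ i = σ (n + 1 - i) := by
  set m := n / 2 with hmdef
  set k := (n + 1) / 2 with hkdef
  have hkm : k + m = n := by omega
  have hm1 : 1 ≤ m := by omega
  set a : ℕ → ℕ := fun j => if σ (j + 1) then 1 else 0 with hadef
  set b : ℕ → ℕ := fun j => if σ (n - j) then 1 else 0 with hbdef
  have ha : ∀ j, a j ≤ 1 := by intro j; simp only [hadef]; split <;> omega
  have hb : ∀ j, b j ≤ 1 := by intro j; simp only [hbdef]; split <;> omega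
  have castite : ∀ c : ℕ, (((if σ c then 1 else 0 : ℕ)) : ZMod (2 ^ m))
      = (if σ c then (1 : ZMod (2 ^ m)) else 0) := by
    intro c; split <;> simp
  -- LHS as cast of a natural sum
  have e1 : (∑ i ∈ Finset.Icc 1 m,
        (if σ i then (1 : ZMod (2 ^ m)) else 0) * 2 ^ (i - 1))
      = ((∑ j ∈ range m, a j * 2 ^ j : ℕ) : ZMod (2 ^ m)) := by
    push_cast
    simp only [hadef, castite]
    rw [← Finset.Ico_add_one_right_eq_Icc, Finset.sum_Ico_eq_sum_range]
    apply Finset.sum_congr (by congr 1 <;> omega)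
    intro i hi
    have h1 : 1 + i - 1 = i := by omega
    rw [h1, Nat.add_comm 1 i]
  have e2 : (∑ i ∈ Finset.Icc (k + 1) n,
        (if σ i then (1 : ZMod (2 ^ m)) else 0) * 2 ^ (n - i))
      = ((∑ j ∈ range m, b j * 2 ^ j : ℕ) : ZMod (2 ^ m)) := by
    push_cast
    simp only [hbdef, castite]
    rw [← Finset.Ico_add_one_right_eq_Icc, Finset.sum_Ico_eq_sum_range,
      ← Finset.sum_range_reflect
        (fun j => (if σ (n - j) then (1 : ZMod (2 ^ m)) else 0) * 2 ^ j) m]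
    apply Finset.sum_congr (by congr 1 <;> omega)
    intro i hi
    simp only [Finset.mem_range] at hi
    have hx : n - (m - 1 - i) = k + 1 + i := by omega
    have hy : n - (k + 1 + i) = m - 1 - i := by omega
    rw [hx, hy]
  rw [e1, e2, ZMod.natCast_eq_natCast_iff]
  have hA := bitsum_lt m a ha
  have hB := bitsum_lt m b hb
  constructor
  · intro h i hi1 hi2
    have heq : (∑ j ∈ range m, a j * 2 ^ j) = ∑ j ∈ range m, b j * 2 ^ j :=
      Nat.ModEq.eq_of_lt_of_lt h hA hB
    have hj := bitsum_inj m a b ha hb heq (i - 1) (by omega)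
    simp only [hadef, hbdef] at hj
    have h1 : i - 1 + 1 = i := by omega
    have h2 : n - (i - 1) = n + 1 - i := by omega
    rw [h1, h2] at hj
    revert hj
    cases σ i <;> cases σ (n + 1 - i) <;> simp
  · intro h
    have heq : (∑ j ∈ range m, a j * 2 ^ j) = ∑ j ∈ range m, b j * 2 ^ j := by
      apply Finset.sum_congr rfl
      intro j hj
      simp only [Finset.mem_range] at hj
      have hσ := h (j + 1) (by omega) (by omega)
      have h2 : n + 1 - (j + 1) = n - j := by omega
      rw [h2] at hσ
      simp only [hadef, hbdef, hσ]
    rw [heq]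
end

section
/- For n ≥ 1, the polynomial Σ_{i=1}^{n} Σ_{j=1}^{n} x_{ij}·((n+1)^{i-1} + (n+1)^{n+j-1}) − Σ_{i=1}^{2n} (n+1)^{i-1} over the ring ℤ_{(n+1)^{2n}} is a characteristic polynomial of the Permutation Matrix test function PERM_n: for every Boolean n×n matrix σ = (σ_{ij}), the congruence Σ_{i,j} σ_{ij}·((n+1)^{i-1} + (n+1)^{n+j-1}) ≡ Σ_{i=1}^{2n} (n+1)^{i-1} (mod (n+1)^{2n}) holds if and only if every row of σ contains exactly one 1 and every column of σ contains exactly one 1. -/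
open Finset

private lemma digit_sum_lt (n m : ℕ) (f : ℕ → ℕ) (hf : ∀ i < m, f i ≤ n) :
    ∑ i ∈ range m, f i * (n + 1) ^ i < (n + 1) ^ m := by
  induction m with
  | zero => simp
  | succ m ih =>
    rw [Finset.sum_range_succ, pow_succ]
    have h1 : ∑ i ∈ range m, f i * (n + 1) ^ i < (n + 1) ^ m :=
      ih (fun i hi => hf i (hi.trans (Nat.lt_succ_self m)))
    have h2 : f m * (n + 1) ^ m ≤ n * (n + 1) ^ m :=
      Nat.mul_le_mul_right _ (hf m (Nat.lt_succ_self m))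
    have : (n + 1) ^ m + n * (n + 1) ^ m = (n + 1) ^ m * (n + 1) := by ring
    omega

private lemma digit_uniq (n : ℕ) : ∀ (m : ℕ) (f g : ℕ → ℕ),
    (∀ i < m, f i ≤ n) → (∀ i < m, g i ≤ n) →
    (∑ i ∈ range m, f i * (n + 1) ^ i = ∑ i ∈ range m, g i * (n + 1) ^ i) →
    ∀ i < m, f i = g i := by
  intro m
  induction m with
  | zero => intro f g _ _ _ i hi; omega
  | succ m ih =>
    intro f g hf hg heq i hi
    rw [Finset.sum_range_succ', Finset.sum_range_succ'] at heq
    simp only [pow_succ, pow_zero, mul_one] at heq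
    have hrw : ∀ h : ℕ → ℕ, ∑ i ∈ range m, h (i + 1) * ((n + 1) ^ i * (n + 1))
        = (n + 1) * ∑ i ∈ range m, h (i + 1) * (n + 1) ^ i := by
      intro h; rw [Finset.mul_sum]; exact Finset.sum_congr rfl fun _ _ => by ring
    rw [hrw f, hrw g] at heq
    have hf0 : f 0 ≤ n := hf 0 (Nat.succ_pos m)
    have hg0 : g 0 ≤ n := hg 0 (Nat.succ_pos m)
    have h0 : f 0 = g 0 := by
      have := congrArg (· % (n + 1)) heq
      simpa [Nat.mul_add_mod, Nat.mod_eq_of_lt (Nat.lt_succ_of_le hf0),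
        Nat.mod_eq_of_lt (Nat.lt_succ_of_le hg0)] using this
    have hS : ∑ i ∈ range m, f (i + 1) * (n + 1) ^ i
        = ∑ i ∈ range m, g (i + 1) * (n + 1) ^ i := by
      have h1 : (n + 1) * ∑ i ∈ range m, f (i + 1) * (n + 1) ^ i
          = (n + 1) * ∑ i ∈ range m, g (i + 1) * (n + 1) ^ i := by omega
      exact Nat.eq_of_mul_eq_mul_left (Nat.succ_pos n) h1
    rcases i with _ | j
    · exact h0
    · exact ih (fun i => f (i + 1)) (fun i => g (i + 1))
        (fun i hi' => hf (i + 1) (by omega)) (fun i hi' => hg (i + 1) (by omega))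
        hS j (by omega)

/-- **Characteristic polynomial of the permutation-matrix test `PERM_n`.**
For `n ≥ 1`, the polynomial
`Σ_{i=1}^{n} Σ_{j=1}^{n} x_{ij}·((n+1)^{i-1} + (n+1)^{n+j-1}) − Σ_{i=1}^{2n} (n+1)^{i-1}`
over `ℤ_{(n+1)^{2n}}` is a characteristic polynomial of `PERM_n`: for every
Boolean `n×n` matrix `σ`, the sum equals `Σ_{i=1}^{2n} (n+1)^{i-1}` mod `(n+1)^{2n}`
iff every row and every column of `σ` contains exactly one `1`.
(Rows and columns are indexed `0,…,n-1` here, so `(n+1)^{i-1}` becomes `(n+1)^i`.) -/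
theorem perm_characteristic_polynomial (n : ℕ) (hn : 1 ≤ n)
    (σ : Fin n → Fin n → Bool) :
    (∑ i : Fin n, ∑ j : Fin n,
        (if σ i j then (1 : ZMod ((n + 1) ^ (2 * n))) else 0) *
          ((n + 1 : ZMod ((n + 1) ^ (2 * n))) ^ (i : ℕ)
            + (n + 1 : ZMod ((n + 1) ^ (2 * n))) ^ (n + (j : ℕ))))
      = (∑ i ∈ Finset.range (2 * n), (n + 1 : ZMod ((n + 1) ^ (2 * n))) ^ i)
      ↔ ((∀ i : Fin n, (Finset.univ.filter fun j : Fin n => σ i j = true).card = 1)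
          ∧ (∀ j : Fin n, (Finset.univ.filter fun i : Fin n => σ i j = true).card = 1)) := by
  set M := (n + 1) ^ (2 * n) with hM
  set r : Fin n → ℕ := fun i => (Finset.univ.filter fun j : Fin n => σ i j = true).card with hr
  set c : Fin n → ℕ := fun j => (Finset.univ.filter fun i : Fin n => σ i j = true).card with hc
  set d : ℕ → ℕ := fun k =>
    if hk : k < n then r ⟨k, hk⟩ else if hk2 : k - n < n then c ⟨k - n, hk2⟩ else 0 with hd
  -- natural number versions
  set A : ℕ := ∑ k ∈ range (2 * n), d k * (n + 1) ^ k with hA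
  set B : ℕ := ∑ k ∈ range (2 * n), 1 * (n + 1) ^ k with hB
  have hdn : ∀ k, d k ≤ n := by
    intro k
    rw [hd]
    dsimp only
    split_ifs with h1 h2
    · exact le_trans (Finset.card_filter_le _ _) (by simp)
    · exact le_trans (Finset.card_filter_le _ _) (by simp)
    · omega
  -- LHS cast
  have hLHS : (∑ i : Fin n, ∑ j : Fin n,
        (if σ i j then (1 : ZMod M) else 0) *
          ((n + 1 : ZMod M) ^ (i : ℕ) + (n + 1 : ZMod M) ^ (n + (j : ℕ))))
      = ((A : ℕ) : ZMod M) := by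
    have hnat : A = ∑ i : Fin n, ∑ j : Fin n,
        (if σ i j then (1 : ℕ) else 0) * ((n + 1) ^ (i : ℕ) + (n + 1) ^ (n + (j : ℕ))) := by
      have hsplit : (∑ i : Fin n, ∑ j : Fin n,
          (if σ i j then (1 : ℕ) else 0) * ((n + 1) ^ (i : ℕ) + (n + 1) ^ (n + (j : ℕ))))
          = (∑ i : Fin n, r i * (n + 1) ^ (i : ℕ))
            + ∑ j : Fin n, c j * (n + 1) ^ (n + (j : ℕ)) := by
        simp only [mul_add, Finset.sum_add_distrib]
        congr 1
        · refine Finset.sum_congr rfl fun i _ => ?_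
          rw [← Finset.sum_mul]
          simp [hr, Finset.sum_boole]
        · rw [Finset.sum_comm]
          refine Finset.sum_congr rfl fun j _ => ?_
          rw [← Finset.sum_mul]
          simp [hc, Finset.sum_boole]
      rw [hsplit, hA]
      have h2n : 2 * n = n + n := by omega
      rw [h2n, Finset.sum_range_add]
      congr 1
      · rw [← Fin.sum_univ_eq_sum_range (fun k => d k * (n + 1) ^ k) n]
        refine Finset.sum_congr rfl fun i _ => ?_
        rw [hd]
        simp [i.isLt]
      · rw [← Fin.sum_univ_eq_sum_range (fun k => d (n + k) * (n + 1) ^ (n + k)) n]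
        refine Finset.sum_congr rfl fun j _ => ?_
        rw [hd]
        have h1 : ¬ (n + (j : ℕ) < n) := by omega
        have h2 : n + (j : ℕ) - n = (j : ℕ) := by omega
        simp [h1, h2, j.isLt]
    rw [hnat]
    push_cast
    rfl
  have hRHS : (∑ i ∈ Finset.range (2 * n), (n + 1 : ZMod M) ^ i) = ((B : ℕ) : ZMod M) := by
    rw [hB]
    push_cast
    simp
  rw [hLHS, hRHS]
  have hAlt : A < M := by
    rw [hA, hM]; exact digit_sum_lt n (2 * n) d (fun i _ => hdn i)
  have hBlt : B < M := by
    rw [hB, hM]; exact digit_sum_lt n (2 * n) (fun _ => 1) (fun i _ => hn)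
  have hcast : ((A : ℕ) : ZMod M) = ((B : ℕ) : ZMod M) ↔ A = B := by
    rw [ZMod.natCast_eq_natCast_iff]
    constructor
    · intro h
      unfold Nat.ModEq at h
      rwa [Nat.mod_eq_of_lt hAlt, Nat.mod_eq_of_lt hBlt] at h
    · intro h; rw [h]
  rw [hcast]
  constructor
  · intro h
    have huniq : ∀ k < 2 * n, d k = 1 := by
      intro k hk
      exact digit_uniq n (2 * n) d (fun _ => 1) (fun i _ => hdn i) (fun i _ => hn)
        (by rw [← hA, ← hB]; exact h) k hk
    constructor
    · intro i
      have := huniq (i : ℕ) (by omega)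
      rw [hd] at this
      simpa [i.isLt] using this
    · intro j
      have := huniq (n + (j : ℕ)) (by omega)
      rw [hd] at this
      have h1 : ¬ (n + (j : ℕ) < n) := by omega
      have h2 : n + (j : ℕ) - n = (j : ℕ) := by omega
      simpa [h1, h2, j.isLt] using this
  · rintro ⟨h1, h2⟩
    rw [hA, hB]
    refine Finset.sum_congr rfl fun k hk => ?_
    rw [Finset.mem_range] at hk
    rw [hd]
    dsimp only
    split_ifs with hk1 hk2
    · exact congrArg (· * (n + 1) ^ k) (h1 ⟨k, hk1⟩)
    · exact congrArg (· * (n + 1) ^ k) (h2 ⟨k - n, hk2⟩)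
    · omega
end

section
/- Let N ≥ 2, let δ ∈ (0,1), and let K ⊆ {0,…,N−1} be a nonempty finite set that is δ-collision-resistant, i.e., |(1/|K|)·Σ_{k∈K} cos(2π k a / N)| < δ for every integer a ≢ 0 (mod N). Let f be a Boolean function of n₁ + n₂ variables with a characteristic polynomial g over ℤ_N that decomposes as g(x, y) = g₁(x) + g₂(y), where g₁ depends only on the first n₁ variables and g₂ only on the last n₂ variables. Then for all σ ∈ {0,1}^{n₁} and γ ∈ {0,1}^{n₂}: (i) if f(σ, γ) = 1, then the hash vectors coincide, h_K(g₁(σ)) = h_K(−g₂(γ)); and (ii) if f(σ, γ) = 0, then |⟨h_K(g₁(σ)), h_K(−g₂(γ))⟩| < δ. -/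
/-!
The inner product of two hashes is `(1/|K|) Σ_{k ∈ K} cos(2π k (M - M') / N)`, by
`cos a cos b + sin a sin b = cos (a - b)`. If `f(σ, γ) = 1` the characteristic polynomial
vanishes, so `g₁(σ) = -g₂(γ)` in `ℤ_N` and the two hashes are literally equal. Otherwise these
residues differ, so their canonical representatives differ by an integer not divisible by `N`,
and collision resistance bounds the inner product by `δ`.
-/

open Real
open scoped RealInnerProductSpace

/-- The quantum hash of an integer `M` for a finite parameter set `K ⊆ ℕ` and
modulus `N`: the vector in `ℝ^{2|K|}` (indexed by pairs `(k, b)` with `k ∈ K`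
and `b : Bool`) whose `(k, false)`-component is `(1/√|K|)·cos(2π k M / N)` and
whose `(k, true)`-component is `(1/√|K|)·sin(2π k M / N)`. -/
noncomputable def quantumHash (N : ℕ) (K : Finset ℕ) (M : ℤ) :
    EuclideanSpace ℝ (↥K × Bool) := WithLp.toLp 2 fun p =>
  (1 / Real.sqrt K.card) *
    (if p.2 then Real.sin (2 * π * ((p.1 : ℕ) : ℝ) * (M : ℝ) / (N : ℝ))
     else Real.cos (2 * π * ((p.1 : ℕ) : ℝ) * (M : ℝ) / (N : ℝ)))

def QuantumHashCollisionResistant (N : ℕ) (K : Finset ℕ) (δ : ℝ) : Prop :=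
  ∀ a : ℤ, ¬ ((N : ℤ) ∣ a) →
    |(1 / (K.card : ℝ)) * ∑ k ∈ K, Real.cos (2 * π * (k : ℝ) * (a : ℝ) / (N : ℝ))| < δ

theorem quantumHash_inner (N : ℕ) (K : Finset ℕ) (M M' : ℤ) :
    ⟪quantumHash N K M, quantumHash N K M'⟫ =
      (1 / (K.card : ℝ)) * ∑ k ∈ K, Real.cos (2 * π * k * ((M - M' : ℤ) : ℝ) / N) := by
  have hscale : 1 / √(K.card : ℝ) * (1 / √(K.card : ℝ)) = 1 / (K.card : ℝ) := by
    rw [div_mul_div_comm, Real.mul_self_sqrt (Nat.cast_nonneg _), one_mul]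
  simp only [PiLp.inner_apply, RCLike.inner_apply, conj_trivial, Fintype.sum_prod_type,
    Fintype.sum_bool, quantumHash, if_true, Bool.false_eq_true, if_false]
  rw [Finset.mul_sum, ← Finset.sum_coe_sort K]
  refine Finset.sum_congr rfl fun k _ => ?_
  have hangle : 2 * π * k * ((M - M' : ℤ) : ℝ) / N = 2 * π * k * M / N - 2 * π * k * M' / N := by
    push_cast; ring
  rw [hangle, Real.cos_sub, ← hscale]
  ring

theorem ZMod.natCast_dvd_intCast_val_sub_intCast_val_iff {N : ℕ} [NeZero N] (x y : ZMod N) :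
    (N : ℤ) ∣ (x.val : ℤ) - y.val ↔ x = y := by
  rw [← ZMod.intCast_eq_intCast_iff_dvd_sub]
  simp only [Int.cast_natCast, ZMod.natCast_zmod_val]
  exact eq_comm

theorem abs_inner_quantumHash_val_lt {N : ℕ} [NeZero N] {K : Finset ℕ} {δ : ℝ}
    (hres : QuantumHashCollisionResistant N K δ) {x y : ZMod N} (hxy : x ≠ y) :
    |⟪quantumHash N K x.val, quantumHash N K y.val⟫| < δ := by
  rw [quantumHash_inner]
  exact hres _ (mt (ZMod.natCast_dvd_intCast_val_sub_intCast_val_iff x y).mp hxy)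

theorem quantum_communication_protocol_correctness_general
    (N : ℕ) (hN : 2 ≤ N) (δ : ℝ)
    (K : Finset ℕ)
    (hres : ∀ a : ℤ, ¬ ((N : ℤ) ∣ a) →
      |(1 / (K.card : ℝ)) *
          ∑ k ∈ K, Real.cos (2 * π * (k : ℝ) * (a : ℝ) / (N : ℝ))| < δ)
    (n₁ n₂ : ℕ) (f : (Fin n₁ → Bool) → (Fin n₂ → Bool) → Bool)
    (g₁ : MvPolynomial (Fin n₁) (ZMod N)) (g₂ : MvPolynomial (Fin n₂) (ZMod N))
    (hchar : ∀ (σ : Fin n₁ → Bool) (γ : Fin n₂ → Bool),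
      MvPolynomial.eval (fun i => if σ i then (1 : ZMod N) else 0) g₁
          + MvPolynomial.eval (fun j => if γ j then (1 : ZMod N) else 0) g₂ = 0
        ↔ f σ γ = true) :
    ∀ (σ : Fin n₁ → Bool) (γ : Fin n₂ → Bool),
      (f σ γ = true →
        quantumHash N K
            ((MvPolynomial.eval (fun i => if σ i then (1 : ZMod N) else 0) g₁).val : ℤ)
          = quantumHash N K
            (((- MvPolynomial.eval (fun j => if γ j then (1 : ZMod N) else 0) g₂)).val : ℤ))
      ∧ (f σ γ = false →
          |⟪quantumHash N K
              ((MvPolynomial.eval (fun i => if σ i then (1 : ZMod N) else 0) g₁).val : ℤ),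
            quantumHash N K
              (((- MvPolynomial.eval (fun j => if γ j then (1 : ZMod N) else 0) g₂)).val : ℤ)⟫|
            < δ) := by
  have : NeZero N := ⟨by omega⟩
  intro σ γ
  have hroot := hchar σ γ
  rw [add_eq_zero_iff_eq_neg] at hroot
  refine ⟨fun hf => by rw [hroot.mpr hf], fun hf => ?_⟩
  refine abs_inner_quantumHash_val_lt hres fun heq => ?_
  simp [hroot.mp heq] at hf

/-- **Correctness of the one-way quantum communication protocol (Theorem 1).**
Let `N ≥ 2`, `δ ∈ (0,1)`, and let `K ⊆ {0,…,N−1}` be nonempty and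
δ-collision-resistant. Let `f` be a Boolean function of `n₁ + n₂` variables
with a characteristic polynomial over `ℤ_N` that decomposes as
`g(x,y) = g₁(x) + g₂(y)`. Then for all inputs `σ, γ`:
(i) if `f(σ,γ) = 1` then `h_K(g₁(σ)) = h_K(−g₂(γ))`, and
(ii) if `f(σ,γ) = 0` then `|⟨h_K(g₁(σ)), h_K(−g₂(γ))⟩| < δ`. -/
theorem quantum_communication_protocol_correctness
    (N : ℕ) (hN : 2 ≤ N) (δ : ℝ) (hδ : δ ∈ Set.Ioo (0 : ℝ) 1)
    (K : Finset ℕ) (hKne : K.Nonempty) (hKlt : ∀ k ∈ K, k < N)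
    (hres : ∀ a : ℤ, ¬ ((N : ℤ) ∣ a) →
      |(1 / (K.card : ℝ)) *
          ∑ k ∈ K, Real.cos (2 * π * (k : ℝ) * (a : ℝ) / (N : ℝ))| < δ)
    (n₁ n₂ : ℕ) (f : (Fin n₁ → Bool) → (Fin n₂ → Bool) → Bool)
    (g₁ : MvPolynomial (Fin n₁) (ZMod N)) (g₂ : MvPolynomial (Fin n₂) (ZMod N))
    (hchar : ∀ (σ : Fin n₁ → Bool) (γ : Fin n₂ → Bool),
      MvPolynomial.eval (fun i => if σ i then (1 : ZMod N) else 0) g₁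
          + MvPolynomial.eval (fun j => if γ j then (1 : ZMod N) else 0) g₂ = 0
        ↔ f σ γ = true) :
    ∀ (σ : Fin n₁ → Bool) (γ : Fin n₂ → Bool),
      (f σ γ = true →
        quantumHash N K
            ((MvPolynomial.eval (fun i => if σ i then (1 : ZMod N) else 0) g₁).val : ℤ)
          = quantumHash N K
            (((- MvPolynomial.eval (fun j => if γ j then (1 : ZMod N) else 0) g₂)).val : ℤ))
      ∧ (f σ γ = false →
          |⟪quantumHash N K
              ((MvPolynomial.eval (fun i => if σ i then (1 : ZMod N) else 0) g₁).val : ℤ),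
            quantumHash N K
              (((- MvPolynomial.eval (fun j => if γ j then (1 : ZMod N) else 0) g₂)).val : ℤ)⟫|
            < δ) :=
  quantum_communication_protocol_correctness_general N hN δ K hres n₁ n₂ f g₁ g₂ hchar
end
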